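/- arXiv:2406.00904 — 4 statements merged into one kernel-verified Lean document; each statement's English description precedes it below -/
import Mathlib

section
/- Let N = 3, N = 4, or N ≥ 10 be an integer. Then the sequence B_N generated by the B-recurrence from the initial conditions ⟨1,2,3,...,N⟩ dies, i.e., is finite. Furthermore, if N ≥ 14, then B_N has exactly N+24 terms: B_N(n) is defined for every n with 1 ≤ n ≤ N+24, and B_N(N+25) is undefined (indeed, computing B_N(N+25) would require the value B_N(14−N) at a nonpositive index). -/
set_option maxRecDepth 40000



/-- `IsBSeqTo N m f` says that `f` realizes the sequence generated by the
`B`-recurrence from initial conditions `⟨1,2,...,N⟩` (no zero convention),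
defined through index `m`: `f n = n` for `1 ≤ n ≤ N`, and for `N < n ≤ m`
each argument `n - f (n-j)` lies in `{1,...,n-1}` and the `B`-recurrence holds. -/
def IsBSeqTo (N m : ℤ) (f : ℤ → ℤ) : Prop :=
  (∀ n : ℤ, 1 ≤ n → n ≤ N → f n = n) ∧
  (∀ n : ℤ, N < n → n ≤ m →
    (1 ≤ f (n - 1) ∧ f (n - 1) ≤ n - 1) ∧
    (1 ≤ f (n - 2) ∧ f (n - 2) ≤ n - 1) ∧
    (1 ≤ f (n - 3) ∧ f (n - 3) ≤ n - 1) ∧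
    f n = f (n - f (n - 1)) + f (n - f (n - 2)) + f (n - f (n - 3)))

/-- `DiesAt m f` says the `B`-recurrence cannot define a term at index `m` from `f`:
some needed argument `m - f (m-j)` falls outside `{1,...,m-1}`. -/
def DiesAt (m : ℤ) (f : ℤ → ℤ) : Prop :=
  ¬ ((1 ≤ f (m - 1) ∧ f (m - 1) ≤ m - 1) ∧
     (1 ≤ f (m - 2) ∧ f (m - 2) ≤ m - 1) ∧
     (1 ≤ f (m - 3) ∧ f (m - 3) ≤ m - 1))


def fT (L : List (List ℤ)) : ℤ → ℤ := fun n => (L.getD ((n-1).toNat / 32) []).getD ((n-1).toNat % 32) 0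

def BCond (f : ℤ → ℤ) (n : ℤ) : Prop :=
  (1 ≤ f (n - 1) ∧ f (n - 1) ≤ n - 1) ∧
  (1 ≤ f (n - 2) ∧ f (n - 2) ≤ n - 1) ∧
  (1 ≤ f (n - 3) ∧ f (n - 3) ≤ n - 1) ∧
  f n = f (n - f (n - 1)) + f (n - f (n - 2)) + f (n - f (n - 3))

instance (f : ℤ → ℤ) (n : ℤ) : Decidable (BCond f n) := by unfold BCond; infer_instance

lemma buildB (N m : ℤ) (f : ℤ → ℤ)
    (h1 : ∀ n ∈ Finset.Icc (1:ℤ) N, f n = n)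
    (h2 : ∀ n : ℤ, N < n → n ≤ m → BCond f n) : IsBSeqTo N m f := by
  refine ⟨fun n a b => h1 n (Finset.mem_Icc.mpr ⟨a, b⟩), fun n a b => h2 n a b⟩

def L3 : List (List Int) := [[1, 2, 3, 6]]
-- N=3 m=4
def L4 : List (List Int) := [[1, 2, 3, 4, 6]]
-- N=4 m=5
def L10 : List (List Int) := [[1, 2, 3, 4, 5, 6, 7, 8, 9, 10, 6, 11, 12, 13, 9, 14, 15, 16, 12, 17, 18, 19, 15, 20, 21, 17, 23, 18, 23, 25, 26, 22], [21, 31, 29, 21, 28, 34, 27, 29, 31, 27, 38, 33, 34, 31, 39, 37, 37, 30, 44, 36, 39, 35, 43, 45, 43, 30, 50, 50, 38, 42, 51, 48], [43, 40, 55, 51, 52, 37, 60, 57, 47, 51, 54, 63, 45, 50, 68, 65, 52, 53, 67, 63, 57, 50, 73, 69, 58, 55, 61, 85, 64, 55, 65, 79], [65, 54, 82, 76, 72, 59, 82, 75, 71, 75, 65, 87, 83, 72, 65, 91, 87, 75, 67, 91, 74, 100, 64, 93, 79, 91, 80, 88, 93, 86, 89, 83], [98, 92, 85, 99, 99, 95,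 71, 102, 96, 103, 87, 100, 100, 97, 107, 100, 105, 89, 96, 124, 110, 81, 91, 125, 117, 102, 98, 92, 136, 109, 100, 114], [113, 116, 106, 111, 122, 126, 110, 88, 140, 128, 131, 86, 134, 136, 116, 106, 129, 136, 115, 120, 112, 134, 148, 108, 117, 136, 149, 123, 108, 139, 154, 136], [105, 117, 155, 160, 120, 122, 140, 165, 127, 124, 165, 137, 132, 134, 138, 151, 144, 147, 153, 144, 142, 132, 174, 141, 158, 128, 149, 187, 152, 113, 153, 182], [186, 109, 165, 142, 214, 126, 144, 160, 170, 154, 149, 166, 196, 142, 150, 142, 225, 176, 143, 135, 183, 198, 176, 130, 155, 209, 185, 158, 149, 202, 179, 145], [184, 206, 168, 183, 157, 194, 192, 159, 182, 179, 213, 151, 200, 144, 242, 165, 211, 156, 184, 221, 188, 153, 177, 256, 179, 170, 185, 228, 186, 178, 205, 198], [189, 214, 168, 220, 208, 187, 214, 205, 224, 178, 188, 245, 212, 173, 183, 249, 235, 183, 175, 239, 218, 216, 186, 220, 218, 217, 184, 235, 228, 217, 183, 263], [208, 212, 182, 279, 225, 211, 187, 256, 244, 208, 207, 250, 246, 221,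 190, 211, 273, 256, 190, 199, 245, 297, 185, 221, 239, 271, 236, 219, 229, 239, 281, 227], [218, 238, 253, 285, 196, 234, 250, 269, 239, 235, 226, 294, 239, 246, 209, 289, 259, 230, 244, 267, 280, 212, 258, 290, 259, 226, 268, 272, 268, 222, 245, 294], [267, 249, 260, 249, 298, 277, 236, 214, 342, 265, 243, 237, 315, 278, 258, 245, 279, 316, 270, 257, 253, 329, 233, 282, 260, 293, 289, 269, 281, 297, 284, 234], [340, 253, 311, 258, 266, 268, 356, 252, 322, 248, 302, 281, 325, 264, 266, 279, 352, 239, 319, 257, 342, 255, 307, 270, 362, 222, 338, 241, 355, 280, 329, 216], [403, 272, 301, 248, 369, 308, 284, 283, 380, 302, 310, 255, 325, 359, 329, 229, 343, 372, 295, 306, 307, 333, 336, 311, 312, 325, 298, 338, 327, 311, 313, 367], [291, 361, 318, 311, 334, 329, 332, 294, 405, 326, 292, 364, 335, 316, 314, 367, 352, 282, 353, 348, 390, 303, 350, 304, 349, 352, 372, 294, 406, 319, 365, 276], [437, 297, 328, 340, 424, 330, 288, 378, 431, 315, 341, 356, 395, 330, 350, 357, 341, 362, 415, 356, 360, 336,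 371, 393, 353, 332, 363, 429, 371, 333, 308, 453], [425, 285, 340, 423, 389, 349, 323, 485, 314, 338, 420, 406, 336, 341, 398, 447, 368, 295, 397, 470, 297, 419, 333, 501, 298, 413, 357, 430, 362, 402, 381, 423], [378, 383, 379, 371, 393, 426, 419, 385, 391, 392, 439, 390, 341, 411, 456, 399, 347, 434, 403, 376, 375, 421, 471, 399, 336, 429, 486, 367, 312, 430, 485, 421], [326, 429, 459, 443, 338, 450, 396, 466, 353, 420, 436, 486, 315, 413, 482, 468, 387, 359, 393, 574, 353, 429, 320, 562, 415, 423, 378, 500, 396, 462, 359, 450], [439, 486, 378, 420, 499, 356, 457, 484, 466, 339, 447, 486, 461, 331, 536, 473, 398, 391, 444, 535, 388, 373, 481, 537, 411, 394, 448, 527, 433, 416, 421, 480], [447, 431, 432, 532, 486, 423, 346, 522, 496, 461, 375, 494, 552, 417, 320, 633, 469, 425, 322, 596, 460, 475, 418, 471, 399, 609, 442, 479, 366, 547, 547, 528], [347, 486, 536, 438, 529, 413, 523, 444, 584, 390, 552, 421, 514, 487, 470, 513, 490, 462, 474, 557, 465, 455, 487, 628, 404, 413, 486, 637, 518, 336,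 470, 552], [609, 385, 479, 495, 677, 411, 420, 580, 568, 473, 381, 513, 676, 506, 379, 541, 532, 513, 461, 539, 468, 587, 441, 537, 581, 506, 427, 627, 527, 427, 441, 657], [644, 417, 402, 566, 667, 483, 451, 516, 555, 534, 557, 537, 493, 558, 598, 413, 581, 535, 504, 515, 544, 560, 541, 475, 545, 487, 711, 460, 539, 497, 546, 542], [596, 462, 540, 607, 489, 547, 565, 483, 540, 514, 722, 398, 533, 498, 738, 452, 490, 567, 611, 501, 612, 508, 549, 563, 643, 528, 455, 642, 573, 565, 493, 571], [544, 651, 435, 616, 604, 537, 475, 588, 644, 533, 535, 569, 657, 482, 531, 628, 578, 461, 641, 545, 597, 544, 608, 518, 563, 622, 646, 498, 550, 655, 608, 506], [581, 661, 551, 571, 546, 650, 622, 533, 537, 676, 693, 503, 447, 641, 711, 642, 420, 632, 739, 492, 580, 544, 603, 646, 560, 548, 575, 699, 573, 546, 601, 635], [680, 544, 561, 662, 545, 583, 722, 592, 578, 581, 639, 595, 617, 634, 610, 540, 640, 617, 620, 614, 652, 606, 666, 570, 644, 525, 673, 699, 512, 611, 661, 675], [570, 648, 569, 689, 615, 605,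 669, 628, 619, 599, 648, 673, 656, 565, 575, 725, 689, 580, 528, 715, 679, 659, 551, 698, 682, 580, 653, 629, 764, 596, 589, 698], [698, 598, 603, 664, 656, 615, 596, 705, 677, 602, 625, 680, 671, 599, 753, 647, 616, 628, 757, 674, 575, 658, 725, 639, 641, 632, 743, 704, 580, 647, 715, 696], [648, 626, 683, 667, 669, 635, 752, 576, 723, 634, 817, 558, 696, 540, 884, 614, 643, 532, 917, 691, 582, 526, 1036]]
-- N=10 m=1015
def L11 : List (List Int) := [[1, 2, 3, 4, 5, 6, 7, 8, 9, 10, 11, 6, 12, 13, 14, 9, 15, 16, 17, 12, 18, 19, 20, 15, 21, 22, 17, 24, 18, 24, 26, 27], [22, 21, 33, 30, 20, 29, 36, 27, 24, 36, 33, 31, 28, 42, 31, 33, 32, 48, 36, 25, 44, 44, 46, 22, 56, 38, 41, 40, 50, 43, 44, 43], [56, 49, 42, 45, 44, 67, 43, 47, 52, 62, 56, 40, 52, 70, 62, 50, 54, 63, 52, 69, 50, 66, 54, 69, 65, 69, 60, 64, 55, 81, 66, 62], [68, 81, 62, 73, 72, 69, 71, 82, 71, 81, 73, 70, 90, 59,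 67, 91, 105, 60, 71, 61, 120]]
-- N=11 m=117
def L12 : List (List Int) := [[1, 2, 3, 4, 5, 6, 7, 8, 9, 10, 11, 12, 6, 13, 14, 15, 9, 16, 17, 18, 12, 19, 20, 21, 15, 22, 23, 17, 25, 18, 25, 27], [28, 22, 21, 35, 31, 19, 30, 31, 40, 25, 31, 27, 47]]
-- N=12 m=45
def L13 : List (List Int) := [[1, 2, 3, 4, 5, 6, 7, 8, 9, 10, 11, 12, 13, 6, 14, 15, 16, 9, 17, 18, 19, 12, 20, 21, 22, 15, 23, 24, 17, 26, 18, 26], [28, 29, 22, 21, 37, 32, 18, 23, 38, 42, 24, 26, 39, 37, 37, 31, 33, 46, 32, 41, 38, 40, 36, 42, 49, 36, 46, 38, 56, 42, 48, 35], [62, 31, 52, 58, 59, 32, 43, 53, 82]]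
-- N=13 m=73

def tail24 (N : ℤ) : List ℤ := [6, N+1, N+2, N+3, 9, N+4, N+5, N+6, 12, N+7, N+8, N+9, 15, N+10, N+11, 17, N+13, 18, N+13, N+15, N+16, 22, 21, 2*N+11]

def fGen (N : ℤ) : ℤ → ℤ := fun n => if n ≤ N then n else (tail24 N).getD (n - N - 1).toNat 0

lemma fGen_le (N x : ℤ) (h : x ≤ N) : fGen N x = x := if_pos h

lemma fv1 (N : ℤ) : fGen N (N + 1) = (6 : ℤ) := by
  show (if N + 1 ≤ N then N + 1 else (tail24 N).getD (N + 1 - N - 1).toNat 0) = (6 : ℤ)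
  rw [if_neg (by omega), show N + 1 - N - 1 = (0 : ℤ) by ring]
  rfl

lemma fv2 (N : ℤ) : fGen N (N + 2) = N + 1 := by
  show (if N + 2 ≤ N then N + 2 else (tail24 N).getD (N + 2 - N - 1).toNat 0) = N + 1
  rw [if_neg (by omega), show N + 2 - N - 1 = (1 : ℤ) by ring]
  rfl

lemma fv3 (N : ℤ) : fGen N (N + 3) = N + 2 := by
  show (if N + 3 ≤ N then N + 3 else (tail24 N).getD (N + 3 - N - 1).toNat 0) = N + 2
  rw [if_neg (by omega), show N + 3 - N - 1 = (2 : ℤ) by ring]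
  rfl

lemma fv4 (N : ℤ) : fGen N (N + 4) = N + 3 := by
  show (if N + 4 ≤ N then N + 4 else (tail24 N).getD (N + 4 - N - 1).toNat 0) = N + 3
  rw [if_neg (by omega), show N + 4 - N - 1 = (3 : ℤ) by ring]
  rfl

lemma fv5 (N : ℤ) : fGen N (N + 5) = (9 : ℤ) := by
  show (if N + 5 ≤ N then N + 5 else (tail24 N).getD (N + 5 - N - 1).toNat 0) = (9 : ℤ)
  rw [if_neg (by omega), show N + 5 - N - 1 = (4 : ℤ) by ring]
  rfl

lemma fv6 (N : ℤ) : fGen N (N + 6) = N + 4 := by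
  show (if N + 6 ≤ N then N + 6 else (tail24 N).getD (N + 6 - N - 1).toNat 0) = N + 4
  rw [if_neg (by omega), show N + 6 - N - 1 = (5 : ℤ) by ring]
  rfl

lemma fv7 (N : ℤ) : fGen N (N + 7) = N + 5 := by
  show (if N + 7 ≤ N then N + 7 else (tail24 N).getD (N + 7 - N - 1).toNat 0) = N + 5
  rw [if_neg (by omega), show N + 7 - N - 1 = (6 : ℤ) by ring]
  rfl

lemma fv8 (N : ℤ) : fGen N (N + 8) = N + 6 := by
  show (if N + 8 ≤ N then N + 8 else (tail24 N).getD (N + 8 - N - 1).toNat 0) = N + 6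
  rw [if_neg (by omega), show N + 8 - N - 1 = (7 : ℤ) by ring]
  rfl

lemma fv9 (N : ℤ) : fGen N (N + 9) = (12 : ℤ) := by
  show (if N + 9 ≤ N then N + 9 else (tail24 N).getD (N + 9 - N - 1).toNat 0) = (12 : ℤ)
  rw [if_neg (by omega), show N + 9 - N - 1 = (8 : ℤ) by ring]
  rfl

lemma fv10 (N : ℤ) : fGen N (N + 10) = N + 7 := by
  show (if N + 10 ≤ N then N + 10 else (tail24 N).getD (N + 10 - N - 1).toNat 0) = N + 7
  rw [if_neg (by omega), show N + 10 - N - 1 = (9 : ℤ) by ring]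
  rfl

lemma fv11 (N : ℤ) : fGen N (N + 11) = N + 8 := by
  show (if N + 11 ≤ N then N + 11 else (tail24 N).getD (N + 11 - N - 1).toNat 0) = N + 8
  rw [if_neg (by omega), show N + 11 - N - 1 = (10 : ℤ) by ring]
  rfl

lemma fv12 (N : ℤ) : fGen N (N + 12) = N + 9 := by
  show (if N + 12 ≤ N then N + 12 else (tail24 N).getD (N + 12 - N - 1).toNat 0) = N + 9
  rw [if_neg (by omega), show N + 12 - N - 1 = (11 : ℤ) by ring]
  rfl

lemma fv13 (N : ℤ) : fGen N (N + 13) = (15 : ℤ) := by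
  show (if N + 13 ≤ N then N + 13 else (tail24 N).getD (N + 13 - N - 1).toNat 0) = (15 : ℤ)
  rw [if_neg (by omega), show N + 13 - N - 1 = (12 : ℤ) by ring]
  rfl

lemma fv14 (N : ℤ) : fGen N (N + 14) = N + 10 := by
  show (if N + 14 ≤ N then N + 14 else (tail24 N).getD (N + 14 - N - 1).toNat 0) = N + 10
  rw [if_neg (by omega), show N + 14 - N - 1 = (13 : ℤ) by ring]
  rfl

lemma fv15 (N : ℤ) : fGen N (N + 15) = N + 11 := by
  show (if N + 15 ≤ N then N + 15 else (tail24 N).getD (N + 15 - N - 1).toNat 0) = N + 11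
  rw [if_neg (by omega), show N + 15 - N - 1 = (14 : ℤ) by ring]
  rfl

lemma fv16 (N : ℤ) : fGen N (N + 16) = (17 : ℤ) := by
  show (if N + 16 ≤ N then N + 16 else (tail24 N).getD (N + 16 - N - 1).toNat 0) = (17 : ℤ)
  rw [if_neg (by omega), show N + 16 - N - 1 = (15 : ℤ) by ring]
  rfl

lemma fv17 (N : ℤ) : fGen N (N + 17) = N + 13 := by
  show (if N + 17 ≤ N then N + 17 else (tail24 N).getD (N + 17 - N - 1).toNat 0) = N + 13
  rw [if_neg (by omega), show N + 17 - N - 1 = (16 : ℤ) by ring]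
  rfl

lemma fv18 (N : ℤ) : fGen N (N + 18) = (18 : ℤ) := by
  show (if N + 18 ≤ N then N + 18 else (tail24 N).getD (N + 18 - N - 1).toNat 0) = (18 : ℤ)
  rw [if_neg (by omega), show N + 18 - N - 1 = (17 : ℤ) by ring]
  rfl

lemma fv19 (N : ℤ) : fGen N (N + 19) = N + 13 := by
  show (if N + 19 ≤ N then N + 19 else (tail24 N).getD (N + 19 - N - 1).toNat 0) = N + 13
  rw [if_neg (by omega), show N + 19 - N - 1 = (18 : ℤ) by ring]
  rfl

lemma fv20 (N : ℤ) : fGen N (N + 20) = N + 15 := by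
  show (if N + 20 ≤ N then N + 20 else (tail24 N).getD (N + 20 - N - 1).toNat 0) = N + 15
  rw [if_neg (by omega), show N + 20 - N - 1 = (19 : ℤ) by ring]
  rfl

lemma fv21 (N : ℤ) : fGen N (N + 21) = N + 16 := by
  show (if N + 21 ≤ N then N + 21 else (tail24 N).getD (N + 21 - N - 1).toNat 0) = N + 16
  rw [if_neg (by omega), show N + 21 - N - 1 = (20 : ℤ) by ring]
  rfl

lemma fv22 (N : ℤ) : fGen N (N + 22) = (22 : ℤ) := by
  show (if N + 22 ≤ N then N + 22 else (tail24 N).getD (N + 22 - N - 1).toNat 0) = (22 : ℤ)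
  rw [if_neg (by omega), show N + 22 - N - 1 = (21 : ℤ) by ring]
  rfl

lemma fv23 (N : ℤ) : fGen N (N + 23) = (21 : ℤ) := by
  show (if N + 23 ≤ N then N + 23 else (tail24 N).getD (N + 23 - N - 1).toNat 0) = (21 : ℤ)
  rw [if_neg (by omega), show N + 23 - N - 1 = (22 : ℤ) by ring]
  rfl

lemma fv24 (N : ℤ) : fGen N (N + 24) = 2 * N + 11 := by
  show (if N + 24 ≤ N then N + 24 else (tail24 N).getD (N + 24 - N - 1).toNat 0) = 2 * N + 11
  rw [if_neg (by omega), show N + 24 - N - 1 = (23 : ℤ) by ring]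
  rfl

lemma gen_case (N : ℤ) (h14 : 14 ≤ N) : ∀ n : ℤ, N < n → n ≤ N + 24 → BCond (fGen N) n := by
  intro n hn1 hn2
  obtain ⟨k, rfl⟩ : ∃ k, n = N + k := ⟨n - N, by ring⟩
  have hk1 : 1 ≤ k := by omega
  have hk2 : k ≤ 24 := by omega
  unfold BCond
  interval_cases k
  · rw [show N + 1 - 1 = N by ring, show N + 1 - 2 = N - 1 by ring, show N + 1 - 3 = N - 2 by ring]
    rw [fGen_le N (N) (by omega), fGen_le N (N - 1) (by omega), fGen_le N (N - 2) (by omega), fv1 N]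
    rw [show N + 1 - (N) = (1 : ℤ) by ring, show N + 1 - (N - 1) = (2 : ℤ) by ring, show N + 1 - (N - 2) = (3 : ℤ) by ring]
    rw [fGen_le N 1 (by omega), fGen_le N 2 (by omega), fGen_le N 3 (by omega)]
    exact ⟨⟨by omega, by omega⟩, ⟨by omega, by omega⟩, ⟨by omega, by omega⟩, by omega⟩
  · rw [show N + 2 - 1 = N + 1 by ring, show N + 2 - 2 = N by ring, show N + 2 - 3 = N - 1 by ring]
    rw [fv1 N, fGen_le N (N) (by omega), fGen_le N (N - 1) (by omega), fv2 N]
    rw [show N + 2 - ((6 : ℤ)) = N - 4 by ring, show N + 2 - (N) = (2 : ℤ) by ring, show N + 2 - (N - 1) = (3 : ℤ) by ring]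
    rw [fGen_le N (N - 4) (by omega), fGen_le N 2 (by omega), fGen_le N 3 (by omega)]
    exact ⟨⟨by omega, by omega⟩, ⟨by omega, by omega⟩, ⟨by omega, by omega⟩, by omega⟩
  · rw [show N + 3 - 1 = N + 2 by ring, show N + 3 - 2 = N + 1 by ring, show N + 3 - 3 = N by ring]
    rw [fv2 N, fv1 N, fGen_le N (N) (by omega), fv3 N]
    rw [show N + 3 - (N + 1) = (2 : ℤ) by ring, show N + 3 - ((6 : ℤ)) = N - 3 by ring, show N + 3 - (N) = (3 : ℤ) by ring]
    rw [fGen_le N 2 (by omega), fGen_le N (N - 3) (by omega), fGen_le N 3 (by omega)]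
    exact ⟨⟨by omega, by omega⟩, ⟨by omega, by omega⟩, ⟨by omega, by omega⟩, by omega⟩
  · rw [show N + 4 - 1 = N + 3 by ring, show N + 4 - 2 = N + 2 by ring, show N + 4 - 3 = N + 1 by ring]
    rw [fv3 N, fv2 N, fv1 N, fv4 N]
    rw [show N + 4 - (N + 2) = (2 : ℤ) by ring, show N + 4 - (N + 1) = (3 : ℤ) by ring, show N + 4 - ((6 : ℤ)) = N - 2 by ring]
    rw [fGen_le N 2 (by omega), fGen_le N 3 (by omega), fGen_le N (N - 2) (by omega)]
    exact ⟨⟨by omega, by omega⟩, ⟨by omega, by omega⟩, ⟨by omega, by omega⟩, by omega⟩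
  · rw [show N + 5 - 1 = N + 4 by ring, show N + 5 - 2 = N + 3 by ring, show N + 5 - 3 = N + 2 by ring]
    rw [fv4 N, fv3 N, fv2 N, fv5 N]
    rw [show N + 5 - (N + 3) = (2 : ℤ) by ring, show N + 5 - (N + 2) = (3 : ℤ) by ring, show N + 5 - (N + 1) = (4 : ℤ) by ring]
    rw [fGen_le N 2 (by omega), fGen_le N 3 (by omega), fGen_le N 4 (by omega)]
    exact ⟨⟨by omega, by omega⟩, ⟨by omega, by omega⟩, ⟨by omega, by omega⟩, by omega⟩
  · rw [show N + 6 - 1 = N + 5 by ring, show N + 6 - 2 = N + 4 by ring, show N + 6 - 3 = N + 3 by ring]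
    rw [fv5 N, fv4 N, fv3 N, fv6 N]
    rw [show N + 6 - ((9 : ℤ)) = N - 3 by ring, show N + 6 - (N + 3) = (3 : ℤ) by ring, show N + 6 - (N + 2) = (4 : ℤ) by ring]
    rw [fGen_le N (N - 3) (by omega), fGen_le N 3 (by omega), fGen_le N 4 (by omega)]
    exact ⟨⟨by omega, by omega⟩, ⟨by omega, by omega⟩, ⟨by omega, by omega⟩, by omega⟩
  · rw [show N + 7 - 1 = N + 6 by ring, show N + 7 - 2 = N + 5 by ring, show N + 7 - 3 = N + 4 by ring]
    rw [fv6 N, fv5 N, fv4 N, fv7 N]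
    rw [show N + 7 - (N + 4) = (3 : ℤ) by ring, show N + 7 - ((9 : ℤ)) = N - 2 by ring, show N + 7 - (N + 3) = (4 : ℤ) by ring]
    rw [fGen_le N 3 (by omega), fGen_le N (N - 2) (by omega), fGen_le N 4 (by omega)]
    exact ⟨⟨by omega, by omega⟩, ⟨by omega, by omega⟩, ⟨by omega, by omega⟩, by omega⟩
  · rw [show N + 8 - 1 = N + 7 by ring, show N + 8 - 2 = N + 6 by ring, show N + 8 - 3 = N + 5 by ring]
    rw [fv7 N, fv6 N, fv5 N, fv8 N]
    rw [show N + 8 - (N + 5) = (3 : ℤ) by ring, show N + 8 - (N + 4) = (4 : ℤ) by ring, show N + 8 - ((9 : ℤ)) = N - 1 by ring]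
    rw [fGen_le N 3 (by omega), fGen_le N 4 (by omega), fGen_le N (N - 1) (by omega)]
    exact ⟨⟨by omega, by omega⟩, ⟨by omega, by omega⟩, ⟨by omega, by omega⟩, by omega⟩
  · rw [show N + 9 - 1 = N + 8 by ring, show N + 9 - 2 = N + 7 by ring, show N + 9 - 3 = N + 6 by ring]
    rw [fv8 N, fv7 N, fv6 N, fv9 N]
    rw [show N + 9 - (N + 6) = (3 : ℤ) by ring, show N + 9 - (N + 5) = (4 : ℤ) by ring, show N + 9 - (N + 4) = (5 : ℤ) by ring]
    rw [fGen_le N 3 (by omega), fGen_le N 4 (by omega), fGen_le N 5 (by omega)]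
    exact ⟨⟨by omega, by omega⟩, ⟨by omega, by omega⟩, ⟨by omega, by omega⟩, by omega⟩
  · rw [show N + 10 - 1 = N + 9 by ring, show N + 10 - 2 = N + 8 by ring, show N + 10 - 3 = N + 7 by ring]
    rw [fv9 N, fv8 N, fv7 N, fv10 N]
    rw [show N + 10 - ((12 : ℤ)) = N - 2 by ring, show N + 10 - (N + 6) = (4 : ℤ) by ring, show N + 10 - (N + 5) = (5 : ℤ) by ring]
    rw [fGen_le N (N - 2) (by omega), fGen_le N 4 (by omega), fGen_le N 5 (by omega)]
    exact ⟨⟨by omega, by omega⟩, ⟨by omega, by omega⟩, ⟨by omega, by omega⟩, by omega⟩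
  · rw [show N + 11 - 1 = N + 10 by ring, show N + 11 - 2 = N + 9 by ring, show N + 11 - 3 = N + 8 by ring]
    rw [fv10 N, fv9 N, fv8 N, fv11 N]
    rw [show N + 11 - (N + 7) = (4 : ℤ) by ring, show N + 11 - ((12 : ℤ)) = N - 1 by ring, show N + 11 - (N + 6) = (5 : ℤ) by ring]
    rw [fGen_le N 4 (by omega), fGen_le N (N - 1) (by omega), fGen_le N 5 (by omega)]
    exact ⟨⟨by omega, by omega⟩, ⟨by omega, by omega⟩, ⟨by omega, by omega⟩, by omega⟩
  · rw [show N + 12 - 1 = N + 11 by ring, show N + 12 - 2 = N + 10 by ring, show N + 12 - 3 = N + 9 by ring]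
    rw [fv11 N, fv10 N, fv9 N, fv12 N]
    rw [show N + 12 - (N + 8) = (4 : ℤ) by ring, show N + 12 - (N + 7) = (5 : ℤ) by ring, show N + 12 - ((12 : ℤ)) = N by ring]
    rw [fGen_le N 4 (by omega), fGen_le N 5 (by omega), fGen_le N (N) (by omega)]
    exact ⟨⟨by omega, by omega⟩, ⟨by omega, by omega⟩, ⟨by omega, by omega⟩, by omega⟩
  · rw [show N + 13 - 1 = N + 12 by ring, show N + 13 - 2 = N + 11 by ring, show N + 13 - 3 = N + 10 by ring]
    rw [fv12 N, fv11 N, fv10 N, fv13 N]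
    rw [show N + 13 - (N + 9) = (4 : ℤ) by ring, show N + 13 - (N + 8) = (5 : ℤ) by ring, show N + 13 - (N + 7) = (6 : ℤ) by ring]
    rw [fGen_le N 4 (by omega), fGen_le N 5 (by omega), fGen_le N 6 (by omega)]
    exact ⟨⟨by omega, by omega⟩, ⟨by omega, by omega⟩, ⟨by omega, by omega⟩, by omega⟩
  · rw [show N + 14 - 1 = N + 13 by ring, show N + 14 - 2 = N + 12 by ring, show N + 14 - 3 = N + 11 by ring]
    rw [fv13 N, fv12 N, fv11 N, fv14 N]
    rw [show N + 14 - ((15 : ℤ)) = N - 1 by ring, show N + 14 - (N + 9) = (5 : ℤ) by ring, show N + 14 - (N + 8) = (6 : ℤ) by ring]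
    rw [fGen_le N (N - 1) (by omega), fGen_le N 5 (by omega), fGen_le N 6 (by omega)]
    exact ⟨⟨by omega, by omega⟩, ⟨by omega, by omega⟩, ⟨by omega, by omega⟩, by omega⟩
  · rw [show N + 15 - 1 = N + 14 by ring, show N + 15 - 2 = N + 13 by ring, show N + 15 - 3 = N + 12 by ring]
    rw [fv14 N, fv13 N, fv12 N, fv15 N]
    rw [show N + 15 - (N + 10) = (5 : ℤ) by ring, show N + 15 - ((15 : ℤ)) = N by ring, show N + 15 - (N + 9) = (6 : ℤ) by ring]
    rw [fGen_le N 5 (by omega), fGen_le N (N) (by omega), fGen_le N 6 (by omega)]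
    exact ⟨⟨by omega, by omega⟩, ⟨by omega, by omega⟩, ⟨by omega, by omega⟩, by omega⟩
  · rw [show N + 16 - 1 = N + 15 by ring, show N + 16 - 2 = N + 14 by ring, show N + 16 - 3 = N + 13 by ring]
    rw [fv15 N, fv14 N, fv13 N, fv16 N]
    rw [show N + 16 - (N + 11) = (5 : ℤ) by ring, show N + 16 - (N + 10) = (6 : ℤ) by ring, show N + 16 - ((15 : ℤ)) = N + 1 by ring]
    rw [fGen_le N 5 (by omega), fGen_le N 6 (by omega), fv1 N]
    exact ⟨⟨by omega, by omega⟩, ⟨by omega, by omega⟩, ⟨by omega, by omega⟩, by omega⟩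
  · rw [show N + 17 - 1 = N + 16 by ring, show N + 17 - 2 = N + 15 by ring, show N + 17 - 3 = N + 14 by ring]
    rw [fv16 N, fv15 N, fv14 N, fv17 N]
    rw [show N + 17 - ((17 : ℤ)) = N by ring, show N + 17 - (N + 11) = (6 : ℤ) by ring, show N + 17 - (N + 10) = (7 : ℤ) by ring]
    rw [fGen_le N (N) (by omega), fGen_le N 6 (by omega), fGen_le N 7 (by omega)]
    exact ⟨⟨by omega, by omega⟩, ⟨by omega, by omega⟩, ⟨by omega, by omega⟩, by omega⟩
  · rw [show N + 18 - 1 = N + 17 by ring, show N + 18 - 2 = N + 16 by ring, show N + 18 - 3 = N + 15 by ring]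
    rw [fv17 N, fv16 N, fv15 N, fv18 N]
    rw [show N + 18 - (N + 13) = (5 : ℤ) by ring, show N + 18 - ((17 : ℤ)) = N + 1 by ring, show N + 18 - (N + 11) = (7 : ℤ) by ring]
    rw [fGen_le N 5 (by omega), fv1 N, fGen_le N 7 (by omega)]
    exact ⟨⟨by omega, by omega⟩, ⟨by omega, by omega⟩, ⟨by omega, by omega⟩, by omega⟩
  · rw [show N + 19 - 1 = N + 18 by ring, show N + 19 - 2 = N + 17 by ring, show N + 19 - 3 = N + 16 by ring]
    rw [fv18 N, fv17 N, fv16 N, fv19 N]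
    rw [show N + 19 - ((18 : ℤ)) = N + 1 by ring, show N + 19 - (N + 13) = (6 : ℤ) by ring, show N + 19 - ((17 : ℤ)) = N + 2 by ring]
    rw [fv1 N, fGen_le N 6 (by omega), fv2 N]
    exact ⟨⟨by omega, by omega⟩, ⟨by omega, by omega⟩, ⟨by omega, by omega⟩, by omega⟩
  · rw [show N + 20 - 1 = N + 19 by ring, show N + 20 - 2 = N + 18 by ring, show N + 20 - 3 = N + 17 by ring]
    rw [fv19 N, fv18 N, fv17 N, fv20 N]
    rw [show N + 20 - (N + 13) = (7 : ℤ) by ring, show N + 20 - ((18 : ℤ)) = N + 2 by ring]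
    rw [fGen_le N 7 (by omega), fv2 N]
    exact ⟨⟨by omega, by omega⟩, ⟨by omega, by omega⟩, ⟨by omega, by omega⟩, by omega⟩
  · rw [show N + 21 - 1 = N + 20 by ring, show N + 21 - 2 = N + 19 by ring, show N + 21 - 3 = N + 18 by ring]
    rw [fv20 N, fv19 N, fv18 N, fv21 N]
    rw [show N + 21 - (N + 15) = (6 : ℤ) by ring, show N + 21 - (N + 13) = (8 : ℤ) by ring, show N + 21 - ((18 : ℤ)) = N + 3 by ring]
    rw [fGen_le N 6 (by omega), fGen_le N 8 (by omega), fv3 N]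
    exact ⟨⟨by omega, by omega⟩, ⟨by omega, by omega⟩, ⟨by omega, by omega⟩, by omega⟩
  · rw [show N + 22 - 1 = N + 21 by ring, show N + 22 - 2 = N + 20 by ring, show N + 22 - 3 = N + 19 by ring]
    rw [fv21 N, fv20 N, fv19 N, fv22 N]
    rw [show N + 22 - (N + 16) = (6 : ℤ) by ring, show N + 22 - (N + 15) = (7 : ℤ) by ring, show N + 22 - (N + 13) = (9 : ℤ) by ring]
    rw [fGen_le N 6 (by omega), fGen_le N 7 (by omega), fGen_le N 9 (by omega)]
    exact ⟨⟨by omega, by omega⟩, ⟨by omega, by omega⟩, ⟨by omega, by omega⟩, by omega⟩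
  · rw [show N + 23 - 1 = N + 22 by ring, show N + 23 - 2 = N + 21 by ring, show N + 23 - 3 = N + 20 by ring]
    rw [fv22 N, fv21 N, fv20 N, fv23 N]
    rw [show N + 23 - ((22 : ℤ)) = N + 1 by ring, show N + 23 - (N + 16) = (7 : ℤ) by ring, show N + 23 - (N + 15) = (8 : ℤ) by ring]
    rw [fv1 N, fGen_le N 7 (by omega), fGen_le N 8 (by omega)]
    exact ⟨⟨by omega, by omega⟩, ⟨by omega, by omega⟩, ⟨by omega, by omega⟩, by omega⟩
  · rw [show N + 24 - 1 = N + 23 by ring, show N + 24 - 2 = N + 22 by ring, show N + 24 - 3 = N + 21 by ring]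
    rw [fv23 N, fv22 N, fv21 N, fv24 N]
    rw [show N + 24 - ((21 : ℤ)) = N + 3 by ring, show N + 24 - ((22 : ℤ)) = N + 2 by ring, show N + 24 - (N + 16) = (8 : ℤ) by ring]
    rw [fv3 N, fv2 N, fGen_le N 8 (by omega)]
    exact ⟨⟨by omega, by omega⟩, ⟨by omega, by omega⟩, ⟨by omega, by omega⟩, by omega⟩


lemma gen_isB (N : ℤ) (h14 : 14 ≤ N) : IsBSeqTo N (N + 24) (fGen N) :=
  buildB N (N + 24) (fGen N)
    (fun n hn => fGen_le N n (Finset.mem_Icc.mp hn).2)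
    (gen_case N h14)

lemma gen_dies (N : ℤ) (h14 : 14 ≤ N) : DiesAt (N + 25) (fGen N) := by
  intro h
  have e : fGen N (N + 25 - 1) = 2 * N + 11 := by
    rw [show N + 25 - 1 = N + 24 by ring, fv24]
  rw [e] at h
  omega

lemma gen_last (N : ℤ) : N + 25 - fGen N (N + 24) = 14 - N := by
  rw [fv24]; ring

lemma case3 : ∃ m f, (3:ℤ) ≤ m ∧ IsBSeqTo 3 m f ∧ DiesAt (m + 1) f := by
  refine ⟨4, fT L3, by norm_num, buildB _ _ _ (by decide)
    (fun n a b => (by decide : ∀ n ∈ Finset.Icc (4:ℤ) 4, BCond (fT L3) n) n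
      (Finset.mem_Icc.mpr ⟨by omega, b⟩)), by unfold DiesAt; decide⟩

lemma case4 : ∃ m f, (4:ℤ) ≤ m ∧ IsBSeqTo 4 m f ∧ DiesAt (m + 1) f := by
  refine ⟨5, fT L4, by norm_num, buildB _ _ _ (by decide)
    (fun n a b => (by decide : ∀ n ∈ Finset.Icc (5:ℤ) 5, BCond (fT L4) n) n
      (Finset.mem_Icc.mpr ⟨by omega, b⟩)), by unfold DiesAt; decide⟩

lemma case10 : ∃ m f, (10:ℤ) ≤ m ∧ IsBSeqTo 10 m f ∧ DiesAt (m + 1) f := by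
  have hA : ∀ n ∈ Finset.Icc (11:ℤ) 500, BCond (fT L10) n := by decide
  have hB : ∀ n ∈ Finset.Icc (501:ℤ) 1015, BCond (fT L10) n := by decide
  refine ⟨1015, fT L10, by norm_num, buildB _ _ _ (by decide) (fun n a b => ?_), by unfold DiesAt; decide⟩
  rcases le_or_gt n 500 with h | h
  · exact hA n (Finset.mem_Icc.mpr ⟨by omega, h⟩)
  · exact hB n (Finset.mem_Icc.mpr ⟨by omega, b⟩)

lemma case11 : ∃ m f, (11:ℤ) ≤ m ∧ IsBSeqTo 11 m f ∧ DiesAt (m + 1) f := by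
  refine ⟨117, fT L11, by norm_num, buildB _ _ _ (by decide)
    (fun n a b => (by decide : ∀ n ∈ Finset.Icc (12:ℤ) 117, BCond (fT L11) n) n
      (Finset.mem_Icc.mpr ⟨by omega, b⟩)), by unfold DiesAt; decide⟩

lemma case12 : ∃ m f, (12:ℤ) ≤ m ∧ IsBSeqTo 12 m f ∧ DiesAt (m + 1) f := by
  refine ⟨45, fT L12, by norm_num, buildB _ _ _ (by decide)
    (fun n a b => (by decide : ∀ n ∈ Finset.Icc (13:ℤ) 45, BCond (fT L12) n) n
      (Finset.mem_Icc.mpr ⟨by omega, b⟩)), by unfold DiesAt; decide⟩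

lemma case13 : ∃ m f, (13:ℤ) ≤ m ∧ IsBSeqTo 13 m f ∧ DiesAt (m + 1) f := by
  refine ⟨73, fT L13, by norm_num, buildB _ _ _ (by decide)
    (fun n a b => (by decide : ∀ n ∈ Finset.Icc (14:ℤ) 73, BCond (fT L13) n) n
      (Finset.mem_Icc.mpr ⟨by omega, b⟩)), by unfold DiesAt; decide⟩

theorem BN_dies (N : ℤ) (hN : N = 3 ∨ N = 4 ∨ 10 ≤ N) :
    (∃ m f, N ≤ m ∧ IsBSeqTo N m f ∧ DiesAt (m + 1) f) ∧
    (14 ≤ N → ∃ f, IsBSeqTo N (N + 24) f ∧ DiesAt (N + 25) f ∧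
      N + 25 - f (N + 24) = 14 - N) := by
  constructor
  · by_cases h14 : 14 ≤ N
    · exact ⟨N + 24, fGen N, by omega, gen_isB N h14,
        by rw [show N + 24 + 1 = N + 25 by ring]; exact gen_dies N h14⟩
    · rcases hN with rfl | rfl | h10
      · exact case3
      · exact case4
      · have h13 : N ≤ 13 := by omega
        interval_cases N
        · exact case10
        · exact case11
        · exact case12
        · exact case13
  · intro h14
    exact ⟨fGen N, gen_isB N h14, gen_dies N h14, gen_last N⟩
end

section
/- Let K ≥ 7, c ≥ 1, and 0 ≤ γ ≤ 6 be integers, and let λ and μ be integers satisfying λ ≥ −2c+2 if γ=0, λ ≥ −2c+1 if γ=1, λ ≥ −2c+4 if γ=2, λ ≥ −2c+3 if γ=3, λ ≥ −2c+2 if γ=4, λ ≥ −2c+1 if γ=5, λ ≥ −2c if γ=6; and μ ≥ −c if γ=0, μ ≥ −c if γ=1, μ ≥ −c+3 if γ=2, μ ≥ −c+2 if γ=3, μ ≥ −c+1 if γ=4, μ ≥ −c if γ=5, μ ≥ −c−1 if γ=6. Set L = K−7c−γ (assumed ≥ 0) and M = K+L+5, and define ν = −2 if γ=0, −2 if γ=1,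 2 if γ=2, 1 if γ=3, 0 if γ=4, −1 if γ=5, −2 if γ=6. Suppose B_C : ℤ → ℤ satisfies: B_C(n)=0 for all n ≤ 0; B_C(n)=n for 1 ≤ n ≤ K; B_C(K+1)=6; B_C(K+L+2)=2K+λ−2; B_C(K+L+3)=2K+μ−1; B_C(K+L+4)=K−2 (the values B_C(K+2),...,B_C(K+L+1) are arbitrary integers); and B_C(n) = B_C(n−B_C(n−1)) + B_C(n−B_C(n−2)) + B_C(n−B_C(n−3)) for all n with M ≤ n ≤ 2K+ν. Then for every integer k ≥ −1 and every r ∈ {0,1,...,6} with M−3 ≤ M+7k+r ≤ 2K+ν: B_C(M+7k)=L+7k+7, B_C(M+7k+1)=M+7k+2, B_C(M+7k+2)=M+7k+4, B_C(M+7k+3)=7, B_C(M+7k+4)=2K+2k+λ, B_C(M+7k+5)=2K+k+μ, and B_C(M+7k+6)=K−2. -/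
lemma row_lemma (K lam mu L M ν : ℤ) (j : ℤ) (hj : 0 ≤ j)
    (hK : 7 ≤ K) (hL0 : 0 ≤ L) (hM : M = K + L + 5)
    (f : ℤ → ℤ)
    (h0 : ∀ n : ℤ, n ≤ 0 → f n = 0)
    (hinit : ∀ n : ℤ, 1 ≤ n → n ≤ K → f n = n)
    (h6 : f (K + 1) = 6)
    (hrec : ∀ n : ℤ, M ≤ n → n ≤ 2 * K + ν →
      f n = f (n - f (n - 1)) + f (n - f (n - 2)) + f (n - f (n - 3)))
    (hm3 : M + 7*j - 3 ≤ 2*K + ν → f (M + 7*j - 3) = 2*K + 2*j - 2 + lam)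
    (hm2 : M + 7*j - 2 ≤ 2*K + ν → f (M + 7*j - 2) = 2*K + j - 1 + mu)
    (hm1 : M + 7*j - 1 ≤ 2*K + ν → f (M + 7*j - 1) = K - 2)
    (F0 : M+7*j ≤ 2*K+ν → L+7*j+7 ≤ K ∧ 6*j+6 ≤ K-L+mu ∧ 5*j+7 ≤ K-L+lam)
    (F1 : M+7*j+1 ≤ 2*K+ν → L+7*j+8 ≤ K ∧ 6*j+7 ≤ K-L+mu)
    (F2 : M+7*j+2 ≤ 2*K+ν → L+7*j+9 ≤ K)
    (F5 : M+7*j+5 ≤ 2*K+ν → 5*j+10 ≤ K-L+lam)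
    (F6 : M+7*j+6 ≤ 2*K+ν → 6*j+11 ≤ K-L+mu ∧ 5*j+11 ≤ K-L+lam) :
    (M+7*j ≤ 2*K+ν → f (M+7*j) = L+7*j+7) ∧
    (M+7*j+1 ≤ 2*K+ν → f (M+7*j+1) = M+7*j+2) ∧
    (M+7*j+2 ≤ 2*K+ν → f (M+7*j+2) = M+7*j+4) ∧
    (M+7*j+3 ≤ 2*K+ν → f (M+7*j+3) = 7) ∧
    (M+7*j+4 ≤ 2*K+ν → f (M+7*j+4) = 2*K+2*j+lam) ∧
    (M+7*j+5 ≤ 2*K+ν → f (M+7*j+5) = 2*K+j+mu) ∧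
    (M+7*j+6 ≤ 2*K+ν → f (M+7*j+6) = K-2) := by
  have c0 : M+7*j ≤ 2*K+ν → f (M+7*j) = L+7*j+7 := by
    intro hub
    obtain ⟨g1, g2, g3⟩ := F0 hub
    have e := hrec (M+7*j) (by omega) hub
    rw [hm1 (by omega), hm2 (by omega), hm3 (by omega),
        show M+7*j-(K-2) = L+7*j+7 from by omega,
        hinit (L+7*j+7) (by omega) (by omega),
        h0 (M+7*j-(2*K+j-1+mu)) (by omega),
        h0 (M+7*j-(2*K+2*j-2+lam)) (by omega)] at e
    rw [e]; ring
  have c1 : M+7*j+1 ≤ 2*K+ν → f (M+7*j+1) = M+7*j+2 := by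
    intro hub
    obtain ⟨g1, g2⟩ := F1 hub
    have e := hrec (M+7*j+1) (by omega) (by omega)
    rw [show M+7*j+1-1 = M+7*j from by ring,
        show M+7*j+1-2 = M+7*j-1 from by ring,
        show M+7*j+1-3 = M+7*j-2 from by ring,
        c0 (by omega), hm1 (by omega), hm2 (by omega),
        show M+7*j+1-(L+7*j+7) = K-1 from by omega,
        show M+7*j+1-(K-2) = L+7*j+8 from by omega,
        hinit (K-1) (by omega) (by omega),
        hinit (L+7*j+8) (by omega) (by omega),
        h0 (M+7*j+1-(2*K+j-1+mu)) (by omega)] at e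
    rw [e]; omega
  have c2 : M+7*j+2 ≤ 2*K+ν → f (M+7*j+2) = M+7*j+4 := by
    intro hub
    have g1 := F2 hub
    have e := hrec (M+7*j+2) (by omega) (by omega)
    rw [show M+7*j+2-1 = M+7*j+1 from by ring,
        show M+7*j+2-2 = M+7*j from by ring,
        show M+7*j+2-3 = M+7*j-1 from by ring,
        c1 (by omega), c0 (by omega), hm1 (by omega),
        show M+7*j+2-(M+7*j+2) = 0 from by ring,
        show M+7*j+2-(L+7*j+7) = K from by omega,
        show M+7*j+2-(K-2) = L+7*j+9 from by omega,
        h0 0 (by omega),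
        hinit K (by omega) (by omega),
        hinit (L+7*j+9) (by omega) (by omega)] at e
    rw [e]; omega
  have c3 : M+7*j+3 ≤ 2*K+ν → f (M+7*j+3) = 7 := by
    intro hub
    have e := hrec (M+7*j+3) (by omega) (by omega)
    rw [show M+7*j+3-1 = M+7*j+2 from by ring,
        show M+7*j+3-2 = M+7*j+1 from by ring,
        show M+7*j+3-3 = M+7*j from by ring,
        c2 (by omega), c1 (by omega), c0 (by omega),
        show M+7*j+3-(M+7*j+4) = -1 from by ring,
        show M+7*j+3-(M+7*j+2) = 1 from by ring,
        show M+7*j+3-(L+7*j+7) = K+1 from by omega,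
        h0 (-1) (by omega),
        hinit 1 (by omega) (by omega),
        h6] at e
    rw [e]; norm_num
  have c4 : M+7*j+4 ≤ 2*K+ν → f (M+7*j+4) = 2*K+2*j+lam := by
    intro hub
    have e := hrec (M+7*j+4) (by omega) (by omega)
    rw [show M+7*j+4-1 = M+7*j+3 from by ring,
        show M+7*j+4-2 = M+7*j+2 from by ring,
        show M+7*j+4-3 = M+7*j+1 from by ring,
        c3 (by omega), c2 (by omega), c1 (by omega),
        show M+7*j+4-(7:ℤ) = M+7*j-3 from by ring,
        show M+7*j+4-(M+7*j+4) = 0 from by ring,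
        show M+7*j+4-(M+7*j+2) = 2 from by ring,
        hm3 (by omega), h0 0 (by omega),
        hinit 2 (by omega) (by omega)] at e
    rw [e]; ring
  have c5 : M+7*j+5 ≤ 2*K+ν → f (M+7*j+5) = 2*K+j+mu := by
    intro hub
    have g1 := F5 hub
    have e := hrec (M+7*j+5) (by omega) (by omega)
    rw [show M+7*j+5-1 = M+7*j+4 from by ring,
        show M+7*j+5-2 = M+7*j+3 from by ring,
        show M+7*j+5-3 = M+7*j+2 from by ring,
        c4 (by omega), c3 (by omega), c2 (by omega),
        h0 (M+7*j+5-(2*K+2*j+lam)) (by omega),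
        show M+7*j+5-(7:ℤ) = M+7*j-2 from by ring,
        hm2 (by omega),
        show M+7*j+5-(M+7*j+4) = 1 from by ring,
        hinit 1 (by omega) (by omega)] at e
    rw [e]; ring
  have c6 : M+7*j+6 ≤ 2*K+ν → f (M+7*j+6) = K-2 := by
    intro hub
    obtain ⟨g1, g2⟩ := F6 hub
    have e := hrec (M+7*j+6) (by omega) (by omega)
    rw [show M+7*j+6-1 = M+7*j+5 from by ring,
        show M+7*j+6-2 = M+7*j+4 from by ring,
        show M+7*j+6-3 = M+7*j+3 from by ring,
        c5 (by omega), c4 (by omega), c3 (by omega),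
        h0 (M+7*j+6-(2*K+j+mu)) (by omega),
        h0 (M+7*j+6-(2*K+2*j+lam)) (by omega),
        show M+7*j+6-(7:ℤ) = M+7*j-1 from by ring,
        hm1 (by omega)] at e
    rw [e]; ring
  exact ⟨c0, c1, c2, c3, c4, c5, c6⟩

theorem lemma_7cyc (K c γ lam mu L M ν : ℤ)
    (hK : 7 ≤ K) (hc : 1 ≤ c) (hγ0 : 0 ≤ γ) (hγ6 : γ ≤ 6)
    (hlam : lam ≥ if γ = 0 then -2 * c + 2 else if γ = 1 then -2 * c + 1
      else if γ = 2 then -2 * c + 4 else if γ = 3 then -2 * c + 3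
      else if γ = 4 then -2 * c + 2 else if γ = 5 then -2 * c + 1 else -2 * c)
    (hmu : mu ≥ if γ = 0 then -c else if γ = 1 then -c
      else if γ = 2 then -c + 3 else if γ = 3 then -c + 2
      else if γ = 4 then -c + 1 else if γ = 5 then -c else -c - 1)
    (hL : L = K - 7 * c - γ) (hL0 : 0 ≤ L) (hM : M = K + L + 5)
    (hν : ν = if γ = 0 then -2 else if γ = 1 then -2 else if γ = 2 then 2
      else if γ = 3 then 1 else if γ = 4 then 0 else if γ = 5 then -1 else -2)
    (f : ℤ → ℤ)
    (h0 : ∀ n : ℤ, n ≤ 0 → f n = 0)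
    (hinit : ∀ n : ℤ, 1 ≤ n → n ≤ K → f n = n)
    (h6 : f (K + 1) = 6)
    (hIC1 : f (K + L + 2) = 2 * K + lam - 2)
    (hIC2 : f (K + L + 3) = 2 * K + mu - 1)
    (hIC3 : f (K + L + 4) = K - 2)
    (hrec : ∀ n : ℤ, M ≤ n → n ≤ 2 * K + ν →
      f n = f (n - f (n - 1)) + f (n - f (n - 2)) + f (n - f (n - 3))) :
    ∀ k : ℤ, -1 ≤ k →
      ((M - 3 ≤ M + 7 * k ∧ M + 7 * k ≤ 2 * K + ν) → f (M + 7 * k) = L + 7 * k + 7) ∧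
      ((M - 3 ≤ M + 7 * k + 1 ∧ M + 7 * k + 1 ≤ 2 * K + ν) → f (M + 7 * k + 1) = M + 7 * k + 2) ∧
      ((M - 3 ≤ M + 7 * k + 2 ∧ M + 7 * k + 2 ≤ 2 * K + ν) → f (M + 7 * k + 2) = M + 7 * k + 4) ∧
      ((M - 3 ≤ M + 7 * k + 3 ∧ M + 7 * k + 3 ≤ 2 * K + ν) → f (M + 7 * k + 3) = 7) ∧
      ((M - 3 ≤ M + 7 * k + 4 ∧ M + 7 * k + 4 ≤ 2 * K + ν) → f (M + 7 * k + 4) = 2 * K + 2 * k + lam) ∧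
      ((M - 3 ≤ M + 7 * k + 5 ∧ M + 7 * k + 5 ≤ 2 * K + ν) → f (M + 7 * k + 5) = 2 * K + k + mu) ∧
      ((M - 3 ≤ M + 7 * k + 6 ∧ M + 7 * k + 6 ≤ 2 * K + ν) → f (M + 7 * k + 6) = K - 2) := by

  have HF : ∀ j : ℤ, 0 ≤ j →
      (M+7*j ≤ 2*K+ν → L+7*j+7 ≤ K ∧ 6*j+6 ≤ K-L+mu ∧ 5*j+7 ≤ K-L+lam) ∧
      (M+7*j+1 ≤ 2*K+ν → L+7*j+8 ≤ K ∧ 6*j+7 ≤ K-L+mu) ∧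
      (M+7*j+2 ≤ 2*K+ν → L+7*j+9 ≤ K) ∧
      (M+7*j+5 ≤ 2*K+ν → 5*j+10 ≤ K-L+lam) ∧
      (M+7*j+6 ≤ 2*K+ν → 6*j+11 ≤ K-L+mu ∧ 5*j+11 ≤ K-L+lam) := by
    intro j hj
    interval_cases γ <;> norm_num at hlam hmu hν <;> omega
  refine Int.le_induction ?_ ?_
  · refine ⟨fun h => ?_, fun h => ?_, fun h => ?_, fun h => ?_,
      fun h => ?_, fun h => ?_, fun h => ?_⟩
    · exact absurd h.1 (by omega)
    · exact absurd h.1 (by omega)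
    · exact absurd h.1 (by omega)
    · exact absurd h.1 (by omega)
    · rw [show M + 7*(-1:ℤ) + 4 = K + L + 2 from by omega, hIC1]; ring
    · rw [show M + 7*(-1:ℤ) + 5 = K + L + 3 from by omega, hIC2]; ring
    · rw [show M + 7*(-1:ℤ) + 6 = K + L + 4 from by omega, hIC3]
  · intro k hk ih
    obtain ⟨hf0, hf1, hf2, hf5, hf6⟩ := HF (k+1) (by omega)
    obtain ⟨R0, R1, R2, R3, R4, R5, R6⟩ :=
      row_lemma K lam mu L M ν (k+1) (by omega) hK hL0 hM f h0 hinit h6 hrec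
        (fun h => by
          have e := ih.2.2.2.2.1 ⟨by omega, by omega⟩
          rw [show M + 7*(k+1) - 3 = M + 7*k + 4 from by ring, e]; ring)
        (fun h => by
          have e := ih.2.2.2.2.2.1 ⟨by omega, by omega⟩
          rw [show M + 7*(k+1) - 2 = M + 7*k + 5 from by ring, e]; ring)
        (fun h => by
          have e := ih.2.2.2.2.2.2 ⟨by omega, by omega⟩
          rw [show M + 7*(k+1) - 1 = M + 7*k + 6 from by ring, e])
        hf0 hf1 hf2 hf5 hf6
    exact ⟨fun h => R0 h.2, fun h => R1 h.2, fun h => R2 h.2, fun h => R3 h.2,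
      fun h => R4 h.2, fun h => R5 h.2, fun h => R6 h.2⟩
end

section
/- Let K ≥ 1 and M ≥ K+5 be integers. Suppose B_D : ℤ → ℤ satisfies: B_D(n)=0 for all n ≤ 0; B_D(1),...,B_D(K) are arbitrary integers; B_D(K+1)=2, B_D(K+2)=M, B_D(K+3)=2; and B_D(n) = B_D(n−B_D(n−1)) + B_D(n−B_D(n−2)) + B_D(n−B_D(n−3)) for all n > K+3. Then for every integer k ≥ 1, B_D(K+2k) = 2^{k−1}·M, and for every integer k ≥ 0, B_D(K+2k+1) = 2. -/
/-!
With `L = f (K + 2m + 2)` huge and its neighbours equal to `2`, the recurrence at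
`K + 2m + 4` reads `f (n - 2) + f (n - L) + f (n - 2) = 2L + 0`, and at `K + 2m + 5` it
reads `f (n - 2L) + f (n - 2) + f (n - L) = 0 + 2 + 0`, since every argument shifted back
by `L` or `2L` is nonpositive. The pattern `2, L, 2` thus moves two places to the right
with `L` doubled, and `2^m M` keeps outgrowing the position `K + 2m + 5`.
-/

def BRecAt (f : ℤ → ℤ) (n : ℤ) : Prop :=
  f n = f (n - f (n - 1)) + f (n - f (n - 2)) + f (n - f (n - 3))

theorem BRecAt.two_cycle_step {f : ℤ → ℤ} {p L : ℤ} (h0 : ∀ n : ℤ, n ≤ 0 → f n = 0)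
    (hp : f p = 2) (hL : f (p + 1) = L) (hp2 : f (p + 2) = 2) (hpL : p + 4 ≤ L) (hL0 : 0 ≤ L)
    (r3 : BRecAt f (p + 3)) (r4 : BRecAt f (p + 4)) :
    f (p + 3) = 2 * L ∧ f (p + 4) = 2 := by
  have hL3 : f (p + 3) = 2 * L := by
    have r3 : f (p + 3) = f (p + 1) + f (p + 3 - L) + f (p + 1) := by
      simpa only [BRecAt, show p + 3 - 1 = p + 2 by ring, show p + 3 - 2 = p + 1 by ring,
        show p + 3 - 3 = p by ring, hp, hL, hp2] using r3
    rw [r3, hL, h0 (p + 3 - L) (by omega)]; ring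
  refine ⟨hL3, ?_⟩
  have r4 : f (p + 4) = f (p + 4 - 2 * L) + f (p + 2) + f (p + 4 - L) := by
    simpa only [BRecAt, show p + 4 - 1 = p + 3 by ring, show p + 4 - 2 = p + 2 by ring,
      show p + 4 - 3 = p + 1 by ring, hL3, hL, hp2] using r4
  rw [r4, hp2, h0 (p + 4 - 2 * L) (by omega), h0 (p + 4 - L) (by omega)]; ring

theorem add_two_mul_le_two_pow_mul {c M : ℤ} (hc : c ≤ M) (hM : 2 ≤ M) (m : ℕ) :
    c + 2 * m ≤ 2 ^ m * M := by
  induction m with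
  | zero => simpa using hc
  | succ m ih =>
    have : (1 : ℤ) ≤ 2 ^ m := one_le_pow₀ one_le_two
    push_cast; rw [pow_succ]; nlinarith

theorem lemma_2cyc (K M : ℤ) (hK : 1 ≤ K) (hM : K + 5 ≤ M)
    (f : ℤ → ℤ)
    (h0 : ∀ n : ℤ, n ≤ 0 → f n = 0)
    (h1 : f (K + 1) = 2) (h2 : f (K + 2) = M) (h3 : f (K + 3) = 2)
    (hrec : ∀ n : ℤ, K + 3 < n →
      f n = f (n - f (n - 1)) + f (n - f (n - 2)) + f (n - f (n - 3))) :
    (∀ k : ℕ, 1 ≤ k → f (K + 2 * (k : ℤ)) = 2 ^ (k - 1) * M) ∧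
    (∀ k : ℕ, f (K + 2 * (k : ℤ) + 1) = 2) := by
  have cycle : ∀ m : ℕ, f (K + 2 * m + 1) = 2 ∧ f (K + 2 * m + 2) = 2 ^ m * M ∧
      f (K + 2 * m + 3) = 2 := by
    intro m
    induction m with
    | zero => simpa using ⟨h1, h2, h3⟩
    | succ m ih =>
      obtain ⟨hp, hL, hq⟩ := ih
      have hpL := add_two_mul_le_two_pow_mul (c := K + 5) hM (by omega) m
      obtain ⟨e4, e5⟩ := BRecAt.two_cycle_step (p := K + 2 * m + 1) (L := 2 ^ m * M) h0 hp
        (by convert hL using 2; ring) (by convert hq using 2; ring) (by linarith) (by linarith)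
        (hrec _ (by omega)) (hrec _ (by omega))
      refine ⟨?_, ?_, ?_⟩
      · convert hq using 2; push_cast; ring
      · convert e4 using 1 <;> push_cast <;> ring_nf
      · convert e5 using 2; push_cast; ring
  refine ⟨fun k hk => ?_, fun k => (cycle k).1⟩
  obtain ⟨m, rfl⟩ := Nat.exists_eq_add_of_le' hk
  simpa [mul_add, add_assoc] using (cycle m).2.1
end

section
/- Let K ≥ 3 and μ ≥ 1 be integers. Suppose B_E : ℤ → ℤ satisfies: B_E(n)=0 for all n ≤ 0; B_E(1)=1, B_E(2)=2, B_E(3)=3; B_E(4),...,B_E(K) are arbitrary integers; B_E(K+1)=K+μ, B_E(K+2)=3, B_E(K+3)=K+3, B_E(K+4)=K+μ+1, B_E(K+5)=5; and B_E(n) = B_E(n−B_E(n−1)) + B_E(n−B_E(n−2)) + B_E(n−B_E(n−3)) for all n with K+5 < n ≤ K+⌊(5μ−15)/2⌋. Then for every integer k ≥ 0 and every r ∈ {0,1,2,3,4} with K+1 ≤ K+5k+r ≤ K+⌊(5μ−15)/2⌋: B_E(K+5k)=5, B_E(K+5k+1)=K+3k+μ, B_E(K+5k+2)=3, B_E(K+5k+3)=K+5k+3,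 and B_E(K+5k+4)=K+3k+μ+1. -/
/-!
Write `N = K + ⌊(5μ - 15)/2⌋`. The claimed values, together with `0, 1, 2, 3` on `n ≤ 3`, form
an explicit function `g = fiveCycle K μ` which itself satisfies the B-recurrence on `(K + 5, N]`:
in each of its three terms the inner value `g (n - i)` is either `n - i` itself (argument `i`),
the entry `3` or `5` of the current or previous block, or one of the large entries
`K + 3k + μ (+ 1)`, which sends the argument to `2k + c - μ ≤ 0` exactly as long as `n ≤ N`.
All these arguments lie in `{n ≤ 3} ∪ (K, n)`, where `B_E` and `g` agree by induction,
so `B_E = g` on `(K, N]`.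
-/

def bRecurrence (f : ℤ → ℤ) (n : ℤ) : ℤ :=
  f (n - f (n - 1)) + f (n - f (n - 2)) + f (n - f (n - 3))

theorem eq_of_bRecurrence {f g : ℤ → ℤ} (P : ℤ → Prop) {a N : ℤ}
    (hinit : ∀ m ≤ a, P m → f m = g m)
    (hf : ∀ m, a < m → m ≤ N → f m = bRecurrence f m)
    (hg : ∀ m, a < m → m ≤ N → g m = bRecurrence g m)
    (hclosed : ∀ m, a < m → m ≤ N → ∀ i, 1 ≤ i → i ≤ 3 →
      P (m - i) ∧ 0 < g (m - i) ∧ P (m - g (m - i))) :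
    ∀ m ≤ N, P m → f m = g m := by
  suffices h : ∀ n : ℕ, ∀ m ≤ a + n, m ≤ N → P m → f m = g m from
    fun m hmN hP => h (m - a).toNat m (by omega) hmN hP
  intro n
  induction n with
  | zero => exact fun m hm _ hP => hinit m (by omega) hP
  | succ n ih =>
    intro m hm hmN hP
    rcases le_or_gt m (a + n) with hle | hgt
    · exact ih m hle hmN hP
    have hstep : ∀ i, 1 ≤ i → i ≤ 3 →
        f (m - f (m - i)) = g (m - g (m - i)) := by
      intro i hi1 hi3
      obtain ⟨hPi, hpos, hPg⟩ := hclosed m (by omega) hmN i hi1 hi3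
      rw [ih (m - i) (by omega) (by omega) hPi]
      exact ih _ (by omega) (by omega) hPg
    rw [hf m (by omega) hmN, hg m (by omega) hmN, bRecurrence, bRecurrence,
      hstep 1 le_rfl (by norm_num), hstep 2 (by norm_num) (by norm_num),
      hstep 3 (by norm_num) le_rfl]

/-- On `4, …, K`, where `B_E` is arbitrary, the value `m` is a placeholder that is never read. -/
def fiveCycle (K mu m : ℤ) : ℤ :=
  if m ≤ K then max m 0
  else if (m - K) % 5 = 0 then 5
  else if (m - K) % 5 = 1 then K + 3 * ((m - K) / 5) + mu
  else if (m - K) % 5 = 2 then 3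
  else if (m - K) % 5 = 3 then m
  else K + 3 * ((m - K) / 5) + mu + 1

section
variable {K mu m : ℤ}

theorem fiveCycle_of_le (h : m ≤ K) : fiveCycle K mu m = max m 0 := by
  simp [fiveCycle, h]

theorem fiveCycle_of_emod_eq_zero (h : K < m) (hr : (m - K) % 5 = 0) : fiveCycle K mu m = 5 := by
  simp [fiveCycle, hr, not_le.2 h]

theorem fiveCycle_of_emod_eq_one (h : K < m) (hr : (m - K) % 5 = 1) :
    fiveCycle K mu m = K + 3 * ((m - K) / 5) + mu := by
  simp [fiveCycle, hr, not_le.2 h]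

theorem fiveCycle_of_emod_eq_two (h : K < m) (hr : (m - K) % 5 = 2) : fiveCycle K mu m = 3 := by
  simp [fiveCycle, hr, not_le.2 h]

theorem fiveCycle_of_emod_eq_three (h : K < m) (hr : (m - K) % 5 = 3) : fiveCycle K mu m = m := by
  simp [fiveCycle, hr, not_le.2 h]

theorem fiveCycle_of_emod_eq_four (h : K < m) (hr : (m - K) % 5 = 4) :
    fiveCycle K mu m = K + 3 * ((m - K) / 5) + mu + 1 := by
  simp [fiveCycle, hr, not_le.2 h]

theorem fiveCycle_eq_bRecurrence (hK : 3 ≤ K) (hm : K + 5 < m) (hmN : m ≤ K + (5 * mu - 15) / 2) :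
    fiveCycle K mu m = bRecurrence (fiveCycle K mu) m := by
  obtain h | h | h | h | h : (m - K) % 5 = 0 ∨ (m - K) % 5 = 1 ∨ (m - K) % 5 = 2 ∨
      (m - K) % 5 = 3 ∨ (m - K) % 5 = 4 := by omega
  all_goals
    simp (disch := omega) only [bRecurrence, fiveCycle_of_le, fiveCycle_of_emod_eq_zero,
      fiveCycle_of_emod_eq_one, fiveCycle_of_emod_eq_two, fiveCycle_of_emod_eq_three,
      fiveCycle_of_emod_eq_four]
    omega

theorem fiveCycle_closed (hK : 3 ≤ K) (hm : K + 5 < m) (hmN : m ≤ K + (5 * mu - 15) / 2)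
    (i : ℤ) (hi1 : 1 ≤ i) (hi3 : i ≤ 3) :
    (m - i ≤ 3 ∨ K < m - i) ∧ 0 < fiveCycle K mu (m - i) ∧
      (m - fiveCycle K mu (m - i) ≤ 3 ∨ K < m - fiveCycle K mu (m - i)) := by
  obtain h | h | h | h | h : (m - i - K) % 5 = 0 ∨ (m - i - K) % 5 = 1 ∨ (m - i - K) % 5 = 2 ∨
      (m - i - K) % 5 = 3 ∨ (m - i - K) % 5 = 4 := by omega
  all_goals
    simp (disch := omega) only [fiveCycle_of_emod_eq_zero,
      fiveCycle_of_emod_eq_one, fiveCycle_of_emod_eq_two, fiveCycle_of_emod_eq_three,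
      fiveCycle_of_emod_eq_four]
    omega

end

theorem lemma_5cyc_general (K mu : ℤ) (hK : 3 ≤ K)
    (f : ℤ → ℤ)
    (h0 : ∀ n : ℤ, n ≤ 0 → f n = 0)
    (h1 : f 1 = 1) (h2 : f 2 = 2) (h3 : f 3 = 3)
    (hK1 : f (K + 1) = K + mu) (hK2 : f (K + 2) = 3) (hK3 : f (K + 3) = K + 3)
    (hK4 : f (K + 4) = K + mu + 1) (hK5 : f (K + 5) = 5)
    (hrec : ∀ n : ℤ, K + 5 < n → n ≤ K + (5 * mu - 15) / 2 →
      f n = f (n - f (n - 1)) + f (n - f (n - 2)) + f (n - f (n - 3))) :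
    ∀ k : ℤ, 0 ≤ k →
      ((K + 1 ≤ K + 5 * k ∧ K + 5 * k ≤ K + (5 * mu - 15) / 2) → f (K + 5 * k) = 5) ∧
      ((K + 1 ≤ K + 5 * k + 1 ∧ K + 5 * k + 1 ≤ K + (5 * mu - 15) / 2) → f (K + 5 * k + 1) = K + 3 * k + mu) ∧
      ((K + 1 ≤ K + 5 * k + 2 ∧ K + 5 * k + 2 ≤ K + (5 * mu - 15) / 2) → f (K + 5 * k + 2) = 3) ∧
      ((K + 1 ≤ K + 5 * k + 3 ∧ K + 5 * k + 3 ≤ K + (5 * mu - 15) / 2) → f (K + 5 * k + 3) = K + 5 * k + 3) ∧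
      ((K + 1 ≤ K + 5 * k + 4 ∧ K + 5 * k + 4 ≤ K + (5 * mu - 15) / 2) → f (K + 5 * k + 4) = K + 3 * k + mu + 1) := by
  have hinit : ∀ m ≤ K + 5, (m ≤ 3 ∨ K < m) → f m = fiveCycle K mu m := by
    intro m hm hP
    obtain hm0 | rfl | rfl | rfl | rfl | rfl | rfl | rfl | rfl :
        m ≤ 0 ∨ m = 1 ∨ m = 2 ∨ m = 3 ∨ m = K + 1 ∨ m = K + 2 ∨ m = K + 3 ∨ m = K + 4 ∨
          m = K + 5 := by omega
    all_goals
      simp (disch := omega) only [h0, h1, h2, h3, hK1, hK2, hK3, hK4, hK5, fiveCycle_of_le,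
        fiveCycle_of_emod_eq_zero, fiveCycle_of_emod_eq_one, fiveCycle_of_emod_eq_two,
        fiveCycle_of_emod_eq_three, fiveCycle_of_emod_eq_four] <;>
      omega
  have hagree := eq_of_bRecurrence (fun m => m ≤ 3 ∨ K < m) hinit hrec
    (fun m hm hmN => fiveCycle_eq_bRecurrence hK hm hmN)
    (fun m hm hmN => fiveCycle_closed hK hm hmN)
  intro k _
  refine ⟨?_, ?_, ?_, ?_, ?_⟩ <;> rintro ⟨hlo, hhi⟩ <;> rw [hagree _ hhi (by omega)] <;>
    simp (disch := omega) only [fiveCycle_of_emod_eq_zero, fiveCycle_of_emod_eq_one,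
      fiveCycle_of_emod_eq_two, fiveCycle_of_emod_eq_three, fiveCycle_of_emod_eq_four] <;>
    omega

theorem lemma_5cyc (K mu : ℤ) (hK : 3 ≤ K) (hmu : 1 ≤ mu)
    (f : ℤ → ℤ)
    (h0 : ∀ n : ℤ, n ≤ 0 → f n = 0)
    (h1 : f 1 = 1) (h2 : f 2 = 2) (h3 : f 3 = 3)
    (hK1 : f (K + 1) = K + mu) (hK2 : f (K + 2) = 3) (hK3 : f (K + 3) = K + 3)
    (hK4 : f (K + 4) = K + mu + 1) (hK5 : f (K + 5) = 5)
    (hrec : ∀ n : ℤ, K + 5 < n → n ≤ K + (5 * mu - 15) / 2 →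
      f n = f (n - f (n - 1)) + f (n - f (n - 2)) + f (n - f (n - 3))) :
    ∀ k : ℤ, 0 ≤ k →
      ((K + 1 ≤ K + 5 * k ∧ K + 5 * k ≤ K + (5 * mu - 15) / 2) → f (K + 5 * k) = 5) ∧
      ((K + 1 ≤ K + 5 * k + 1 ∧ K + 5 * k + 1 ≤ K + (5 * mu - 15) / 2) → f (K + 5 * k + 1) = K + 3 * k + mu) ∧
      ((K + 1 ≤ K + 5 * k + 2 ∧ K + 5 * k + 2 ≤ K + (5 * mu - 15) / 2) → f (K + 5 * k + 2) = 3) ∧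
      ((K + 1 ≤ K + 5 * k + 3 ∧ K + 5 * k + 3 ≤ K + (5 * mu - 15) / 2) → f (K + 5 * k + 3) = K + 5 * k + 3) ∧
      ((K + 1 ≤ K + 5 * k + 4 ∧ K + 5 * k + 4 ≤ K + (5 * mu - 15) / 2) → f (K + 5 * k + 4) = K + 3 * k + mu + 1) :=
  lemma_5cyc_general K mu hK f h0 h1 h2 h3 hK1 hK2 hK3 hK4 hK5 hrec
end
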